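/- If (G,σ) is a best match graph, then (G,σ) contains no induced F2-graph. -/

import Mathlib

/-- A rooted (phylogenetic) tree on leaf set `V`, encoded by its hierarchy of
clusters `L(T(v))`, `v ∈ V(T)`: a rooted tree on leaf set `V` corresponds
exactly to a family of nonempty, pairwise compatible subsets of `V` containing
all singletons and `V` itself.  Together with a coloring `σ : V → M` this is a
leaf-colored tree. -/
structure PhyloTree (V : Type) where
  clusters : Set (Set V)
  compat : ∀ p ∈ clusters, ∀ q ∈ clusters, p ⊆ q ∨ q ⊆ p ∨ p ∩ q = ∅
  singleton_mem : ∀ v : V, {v} ∈ clusters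
  univ_mem : Set.univ ∈ clusters
  nonempty_mem : ∀ p ∈ clusters, p.Nonempty

namespace PhyloTree

variable {V M : Type}

/-- The cluster `L(T(lca(x,y)))` of the last common ancestor of `x` and `y`;
for inner vertices `u,v` of a tree one has `u ⪯_T v ↔ L(T(u)) ⊆ L(T(v))`. -/
def lcaSet (T : PhyloTree V) (x y : V) : Set V :=
  ⋂₀ {p : Set V | p ∈ T.clusters ∧ x ∈ p ∧ y ∈ p}

/-- `T` displays the triple `xy|z`, i.e. `lca(x,y) ≺ lca(x,z) = lca(y,z)`. -/
def Displays (T : PhyloTree V) (x y z : V) : Prop :=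
  T.lcaSet x y ⊂ T.lcaSet x z ∧ T.lcaSet x z = T.lcaSet y z

/-- `y` is a best match of `x` in the leaf-colored tree `(T,σ)`. -/
def BestMatch (T : PhyloTree V) (σ : V → M) (x y : V) : Prop :=
  σ x ≠ σ y ∧ ∀ y' : V, σ y' = σ y → T.lcaSet x y ⊆ T.lcaSet x y'

end PhyloTree

variable {V M : Type}

/-- `(T,σ)` explains `(G,σ)`, i.e. `(G,σ) = G(T,σ)`. -/
def Explains (T : PhyloTree V) (σ : V → M) (G : V → V → Prop) : Prop :=
  ∀ x y : V, G x y ↔ T.BestMatch σ x y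

/-- `(G,σ)` is a best match graph. -/
def IsBMG (G : V → V → Prop) (σ : V → M) : Prop :=
  ∃ T : PhyloTree V, Explains T σ G

/-- The triple `xy|y'` is informative for `(G,σ)`. -/
def InformativeTriple (G : V → V → Prop) (σ : V → M) (x y y' : V) : Prop :=
  x ≠ y ∧ x ≠ y' ∧ y ≠ y' ∧ σ x ≠ σ y ∧ σ y = σ y' ∧ G x y ∧ ¬ G x y'

/-- The triple `xy|y'` is forbidden for `(G,σ)`. -/
def ForbiddenTriple (G : V → V → Prop) (σ : V → M) (x y y' : V) : Prop :=
  x ≠ y ∧ x ≠ y' ∧ y ≠ y' ∧ σ x ≠ σ y ∧ σ y = σ y' ∧ G x y ∧ G x y'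

/-- `(G,σ)` is sf-colored: `σ` is proper and every vertex has an out-neighbor
of every color present in the graph other than its own. -/
def SfColored (G : V → V → Prop) (σ : V → M) : Prop :=
  (∀ x y : V, G x y → σ x ≠ σ y) ∧
  ∀ (x : V) (s : M), (∃ v : V, σ v = s) → s ≠ σ x → ∃ y : V, σ y = s ∧ G x y

/-- `(G,σ)` contains an induced F1-graph. -/
def HasF1 (G : V → V → Prop) (σ : V → M) : Prop :=
  ∃ x1 x2 y1 y2 : V,
    x1 ≠ x2 ∧ y1 ≠ y2 ∧
    σ x1 = σ x2 ∧ σ y1 = σ y2 ∧ σ x1 ≠ σ y1 ∧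
    ¬ G x1 x2 ∧ ¬ G x2 x1 ∧ ¬ G y1 y2 ∧ ¬ G y2 y1 ∧
    G x1 y1 ∧ G y2 x2 ∧ G y1 x2 ∧ ¬ G x1 y2 ∧ ¬ G y2 x1

/-- `(G,σ)` contains an induced F2-graph. -/
def HasF2 (G : V → V → Prop) (σ : V → M) : Prop :=
  ∃ x1 x2 y1 y2 : V,
    x1 ≠ x2 ∧ y1 ≠ y2 ∧
    σ x1 = σ x2 ∧ σ y1 = σ y2 ∧ σ x1 ≠ σ y1 ∧
    ¬ G x1 x2 ∧ ¬ G x2 x1 ∧ ¬ G y1 y2 ∧ ¬ G y2 y1 ∧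
    G x1 y1 ∧ G y1 x2 ∧ G x2 y2 ∧ ¬ G x1 y2

/-- `(G,σ)` contains an induced F3-graph. -/
def HasF3 (G : V → V → Prop) (σ : V → M) : Prop :=
  ∃ x1 x2 y1 y2 y3 : V,
    x1 ≠ x2 ∧ y1 ≠ y2 ∧ y1 ≠ y3 ∧ y2 ≠ y3 ∧
    σ x1 = σ x2 ∧ σ y1 = σ y2 ∧ σ y2 = σ y3 ∧ σ x1 ≠ σ y1 ∧
    ¬ G x1 x2 ∧ ¬ G x2 x1 ∧ ¬ G y1 y2 ∧ ¬ G y2 y1 ∧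
    ¬ G y1 y3 ∧ ¬ G y3 y1 ∧ ¬ G y2 y3 ∧ ¬ G y3 y2 ∧
    G x1 y1 ∧ G x2 y2 ∧ G x1 y3 ∧ G x2 y3 ∧ ¬ G x1 y2 ∧ ¬ G x2 y1

/-!
In an F2-graph `x₁ → y₁ → x₂ → y₂`, the arc `x₂ → y₂` puts `y₂` below `lca(x₂, y₁)`, and the arc
`y₁ → x₂` puts `lca(y₁, x₂)` below `lca(y₁, x₁)`. Hence `y₂` lies below `lca(x₁, y₁)`, so `y₂`
is at least as close to `x₁` as the best match `y₁` of the same color, i.e. `(x₁, y₂)` is an arc.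
-/

namespace PhyloTree

variable {V M : Type} (T : PhyloTree V)

theorem lcaSet_comm (x y : V) : T.lcaSet x y = T.lcaSet y x := by
  simp only [lcaSet, and_comm (a := x ∈ _)]

theorem mem_lcaSet_right (x y : V) : y ∈ T.lcaSet x y :=
  fun _ hp => hp.2.2

theorem lcaSet_subset_of_mem {x y z : V} (hz : z ∈ T.lcaSet x y) :
    T.lcaSet x z ⊆ T.lcaSet x y :=
  fun _ hv p hp => hv p ⟨hp.1, hp.2.1, hz p hp⟩

variable {T} {σ : V → M}

theorem BestMatch.mem_lcaSet {x y y' : V} (h : T.BestMatch σ x y) (hy' : σ y' = σ y) :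
    y ∈ T.lcaSet x y' :=
  h.2 y' hy' (T.mem_lcaSet_right x y)

theorem BestMatch.of_mem_lcaSet {x y y' : V} (h : T.BestMatch σ x y) (hy' : σ y' = σ y)
    (hmem : y' ∈ T.lcaSet x y) : T.BestMatch σ x y' :=
  ⟨hy' ▸ h.1, fun y'' hy'' => (T.lcaSet_subset_of_mem hmem).trans (h.2 y'' (hy''.trans hy'))⟩

end PhyloTree

theorem bmg_no_F2_general (G : V → V → Prop) (σ : V → M)
    (h : IsBMG G σ) : ¬ HasF2 G σ := by
  obtain ⟨T, hT⟩ := h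
  rintro ⟨x1, x2, y1, y2, -, -, hx, hy, -, -, -, -, -, h11, h12, h22, hn⟩
  have hy2 : y2 ∈ T.lcaSet x1 y1 := by
    have hy2' : y2 ∈ T.lcaSet y1 x2 := T.lcaSet_comm x2 y1 ▸ ((hT x2 y2).1 h22).mem_lcaSet hy
    rw [T.lcaSet_comm]
    exact ((hT y1 x2).1 h12).2 x1 hx hy2'
  exact hn <| (hT x1 y2).2 <| ((hT x1 y1).1 h11).of_mem_lcaSet hy.symm hy2

/-- A BMG contains no induced F2-graph. -/
theorem bmg_no_F2 [Fintype V] (G : V → V → Prop) (σ : V → M)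
    (h : IsBMG G σ) : ¬ HasF2 G σ :=
  bmg_no_F2_general G σ h
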